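/- Let d ≥ 1, K ≥ 0, and let φ : ℝ^d → ℝ be K-Lipschitz. For t > 0 set ψ_t(y) = ‖y‖²/2 + t·φ(y), w_t(x) = sup_{y ∈ ℝ^d} (⟨x,y⟩ − ψ_t(y)), and for ε > 0 let w^ε_t(x) = ‖x‖²/2 − t·u^ε_t(x), where u^ε_t is the Cole–Hopf function. Then for each fixed t > 0, w^ε_t(x) → w_t(x) as ε → 0⁺ for every x ∈ ℝ^d, and the convergence is uniform on every compact subset of ℝ^d. -/

import Mathlib

open scoped RealInnerProductSpace
open MeasureTheory
noncomputable section

/-- The Cole–Hopf function. -/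
def coleHopf {d : ℕ} (φ : EuclideanSpace ℝ (Fin d) → ℝ) (ε t : ℝ)
    (x : EuclideanSpace ℝ (Fin d)) : ℝ :=
  -ε * Real.log ((2 * Real.pi * ε * t) ^ (-(d : ℝ) / 2) *
    ∫ y : EuclideanSpace ℝ (Fin d),
      Real.exp (-‖x - y‖ ^ 2 / (2 * ε * t) - φ y / ε))

/-- `w_t(x) = sup_y (⟨x,y⟩ − (‖y‖²/2 + t φ(y)))`. -/
def wFun {d : ℕ} (φ : EuclideanSpace ℝ (Fin d) → ℝ) (t : ℝ)
    (x : EuclideanSpace ℝ (Fin d)) : ℝ :=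
  ⨆ y : EuclideanSpace ℝ (Fin d), (⟪x, y⟫ - (‖y‖ ^ 2 / 2 + t * φ y))

/-!
With `η = ε t` and `g_x(y) = ⟪x, y⟫ - ψ_t(y)` (here `legendreIntegrand φ t x y`), completing
the square in the heat kernel gives
`‖x‖²/2 - t u^ε_t(x) = -(d/2) η log (2πη) + η log ∫ exp (g_x(y) / η) dy`,
so the theorem is Laplace's principle `η log ∫ exp (g_x / η) → sup g_x` with a rate.
Since `φ` is `K`-Lipschitz, `g_x` is bounded by a concave quadratic, hence attains its maximum at
some `y₀` with `‖y₀‖ ≤ 2 (‖x‖ + t K)`, and is `L`-Lipschitz near `y₀`. For `η ≤ 1`, comparing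
`exp (g_x / η)` with `exp (g_x(y₀) / η - g_x(y₀)) exp g_x` from above and with its mass on the
ball `B(y₀, η)` from below gives the error bound `C (η + |η log η|)`, with `C` uniform for `x` in
a ball.
-/

open scoped NNReal
open Real Filter Topology Metric Module

theorem exp_div_le_exp_sub_mul_exp {a S η : ℝ} (haS : a ≤ S) (hη : 0 < η) (hη1 : η ≤ 1) :
    exp (a / η) ≤ exp (S / η - S) * exp a := by
  rw [← exp_add, exp_le_exp]
  have hfactor : S / η - S + a - a / η = (S - a) * (1 / η - 1) := by field_simp; ring
  have : 0 ≤ (S - a) * (1 / η - 1) :=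
    mul_nonneg (sub_nonneg.2 haS) (sub_nonneg.2 (one_le_one_div hη hη1))
  linarith

theorem continuous_mul_log_const_mul (c : ℝ) : Continuous fun x => x * log (c * x) := by
  rcases eq_or_ne c 0 with rfl | hc
  · simpa using continuous_const
  · refine ((continuous_mul_log.comp (continuous_const_mul c)).div_const c).congr fun x => ?_
    simp only [Function.comp_apply]
    field_simp

section Laplace

variable {E : Type*} [MeasurableSpace E] {μ : Measure E} {f : E → ℝ} {S η : ℝ}

theorem integrable_exp_div_of_le (hf : Measurable f) (hfS : ∀ y, f y ≤ S)
    (hint : Integrable (fun y => exp (f y)) μ) (hη : 0 < η) (hη1 : η ≤ 1) :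
    Integrable (fun y => exp (f y / η)) μ :=
  (hint.const_mul (exp (S / η - S))).mono' (hf.div_const η).exp.aestronglyMeasurable
    (.of_forall fun y => by
      rw [norm_of_nonneg (exp_pos _).le]
      exact exp_div_le_exp_sub_mul_exp (hfS y) hη hη1)

theorem mul_log_integral_exp_div_le [NeZero μ] {A : ℝ} (hf : Measurable f) (hfS : ∀ y, f y ≤ S)
    (hint : Integrable (fun y => exp (f y)) μ) (hlogA : log (∫ y, exp (f y) ∂μ) ≤ S + A)
    (hη : 0 < η) (hη1 : η ≤ 1) :
    η * log (∫ y, exp (f y / η) ∂μ) ≤ S + η * A := by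
  have hintη := integrable_exp_div_of_le hf hfS hint hη hη1
  have hle : ∫ y, exp (f y / η) ∂μ ≤ exp (S / η - S) * ∫ y, exp (f y) ∂μ := by
    rw [← integral_const_mul]
    exact integral_mono hintη (hint.const_mul _) fun y => exp_div_le_exp_sub_mul_exp (hfS y) hη hη1
  have hlog : log (∫ y, exp (f y / η) ∂μ) ≤ S / η + A := by
    calc log (∫ y, exp (f y / η) ∂μ) ≤ log (exp (S / η - S) * ∫ y, exp (f y) ∂μ) :=
          log_le_log (integral_exp_pos hintη) hle
      _ = S / η - S + log (∫ y, exp (f y) ∂μ) := by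
          rw [log_mul (exp_pos _).ne' (integral_exp_pos hint).ne', log_exp]
      _ ≤ S / η + A := by linarith
  calc η * log (∫ y, exp (f y / η) ∂μ) ≤ η * (S / η + A) := mul_le_mul_of_nonneg_left hlog hη.le
    _ = S + η * A := by field_simp

variable [NormedAddCommGroup E] [NormedSpace ℝ E] [FiniteDimensional ℝ E] [BorelSpace E]
  [μ.IsAddHaarMeasure]

theorem le_mul_log_integral_exp_div {y₀ : E} {L : ℝ} (hη : 0 < η)
    (hnear : ∀ y ∈ closedBall y₀ η, S - L * η ≤ f y)
    (hint : Integrable (fun y => exp (f y / η)) μ) :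
    S - L * η + finrank ℝ E * (η * log η) + η * log (μ.real (closedBall 0 1))
      ≤ η * log (∫ y, exp (f y / η) ∂μ) := by
  set V := μ.real (closedBall (0 : E) 1)
  have hV : 0 < V :=
    ENNReal.toReal_pos (measure_closedBall_pos μ 0 one_pos).ne' measure_closedBall_lt_top.ne
  have hball : exp (S / η - L) * (η ^ finrank ℝ E * V) ≤ ∫ y, exp (f y / η) ∂μ := by
    rw [← μ.addHaar_real_closedBall' y₀ hη.le]
    calc exp (S / η - L) * μ.real (closedBall y₀ η)
        ≤ ∫ y in closedBall y₀ η, exp (f y / η) ∂μ := by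
          refine setIntegral_ge_of_const_le_real measurableSet_closedBall
            measure_closedBall_lt_top.ne (fun y hy => ?_) hint.integrableOn
          rw [exp_le_exp, show S / η - L = (S - L * η) / η by field_simp]
          gcongr
          exact hnear y hy
      _ ≤ ∫ y, exp (f y / η) ∂μ :=
          setIntegral_le_integral hint (.of_forall fun y => (exp_pos _).le)
  have hlog := log_le_log (by positivity) hball
  rw [log_mul (exp_pos _).ne' (by positivity), log_exp, log_mul (by positivity) hV.ne',
    log_pow] at hlog
  calc S - L * η + finrank ℝ E * (η * log η) + η * log V
      = η * (S / η - L + (finrank ℝ E * log η + log V)) := by field_simp; ring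
    _ ≤ η * log (∫ y, exp (f y / η) ∂μ) := mul_le_mul_of_nonneg_left hlog hη.le

/-- Laplace's method, with a rate. -/
theorem abs_mul_log_integral_exp_div_sub_le {y₀ : E} {L A : ℝ} (hf : Measurable f)
    (hmax : ∀ y, f y ≤ f y₀) (hL : 0 ≤ L) (hnear : ∀ y, dist y y₀ ≤ 1 → f y₀ - L * dist y y₀ ≤ f y)
    (hint : Integrable (fun y => exp (f y)) μ) (hA : 0 ≤ A)
    (hlogA : log (∫ y, exp (f y) ∂μ) ≤ f y₀ + A) (hη : 0 < η) (hη1 : η ≤ 1) :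
    |η * log (∫ y, exp (f y / η) ∂μ) - f y₀|
      ≤ (A + L + finrank ℝ E + |log (μ.real (closedBall 0 1))|) * (η + |η * log η|) := by
  have hnear' : ∀ y ∈ closedBall y₀ η, f y₀ - L * η ≤ f y := fun y hy => by
    have hy : dist y y₀ ≤ η := hy
    nlinarith [hnear y (hy.trans hη1)]
  have hupper := mul_log_integral_exp_div_le hf hmax hint hlogA hη hη1
  have hlower := le_mul_log_integral_exp_div hη hnear'
    (integrable_exp_div_of_le hf hmax hint hη hη1) (μ := μ)
  set r := η + |η * log η|
  set n : ℝ := (finrank ℝ E : ℝ)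
  set logV := log (μ.real (closedBall (0 : E) 1))
  have hn : 0 ≤ n := Nat.cast_nonneg _
  have hη_r : η ≤ r := le_add_of_nonneg_right (abs_nonneg _)
  have hr : 0 ≤ r := hη.le.trans hη_r
  have hηlogη : -(η * log η) ≤ r := (neg_le_abs _).trans (le_add_of_nonneg_left hη.le)
  have hηlogV : -(η * logV) ≤ |logV| * r := by
    have := mul_le_mul_of_nonneg_left (neg_abs_le logV) hη.le
    nlinarith [mul_le_mul_of_nonneg_left hη_r (abs_nonneg logV)]
  have := mul_le_mul_of_nonneg_left hη_r hA
  have := mul_le_mul_of_nonneg_right hη_r hL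
  have := mul_le_mul_of_nonneg_left hηlogη hn
  have := mul_nonneg hA hr
  have := mul_nonneg hL hr
  have := mul_nonneg hn hr
  have := mul_nonneg (abs_nonneg logV) hr
  rw [abs_le]
  constructor <;> linarith

end Laplace

section Gaussian

variable {V : Type*} [NormedAddCommGroup V] [InnerProductSpace ℝ V] [FiniteDimensional ℝ V]
  [MeasurableSpace V] [BorelSpace V]

theorem integrable_exp_neg_mul_sq_norm {b : ℝ} (hb : 0 < b) :
    Integrable (fun v : V => exp (-b * ‖v‖ ^ 2)) := by
  refine (GaussianFourier.integrable_cexp_neg_mul_sq_norm_add (b := (b : ℂ)) (by simpa using hb)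
    0 (0 : V)).norm.congr (.of_forall fun v => ?_)
  simp [Complex.norm_exp, ← Complex.ofReal_pow]

theorem integrable_exp_mul_norm_sub_mul_sq_norm_sub (c : ℝ) {s : ℝ} (hs : 0 < s) (a : ℝ) :
    Integrable (fun v : V => exp (c * ‖v‖ - s * ‖v‖ ^ 2 - a)) := by
  refine ((integrable_exp_neg_mul_sq_norm (half_pos hs)).const_mul
    (exp (c ^ 2 / (2 * s) - a))).mono' (by fun_prop) (.of_forall fun v => ?_)
  rw [norm_of_nonneg (exp_pos _).le, ← exp_add, exp_le_exp]
  have h : 2 * s * (c ^ 2 / (2 * s)) = c ^ 2 := by field_simp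
  nlinarith [sq_nonneg (c - s * ‖v‖)]

end Gaussian

def legendreIntegrand {V : Type*} [NormedAddCommGroup V] [InnerProductSpace ℝ V]
    (φ : V → ℝ) (t : ℝ) (x y : V) : ℝ :=
  ⟪x, y⟫ - (‖y‖ ^ 2 / 2 + t * φ y)

section LegendreIntegrand

variable {V : Type*} [NormedAddCommGroup V] [InnerProductSpace ℝ V] {φ : V → ℝ} {K : ℝ≥0}
  {t : ℝ}

theorem continuous_legendreIntegrand (hφ : LipschitzWith K φ) (x : V) :
    Continuous (legendreIntegrand φ t x) := by
  have := hφ.continuous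
  unfold legendreIntegrand
  fun_prop

theorem legendreIntegrand_le (hφ : LipschitzWith K φ) (ht : 0 ≤ t) (x y : V) :
    legendreIntegrand φ t x y ≤ (‖x‖ + t * K) * ‖y‖ - ‖y‖ ^ 2 / 2 - t * φ 0 := by
  have hinner : ⟪x, y⟫ ≤ ‖x‖ * ‖y‖ := real_inner_le_norm x y
  have hlip : φ 0 - φ y ≤ K * ‖y‖ := by
    simpa [dist_eq_norm, Real.dist_eq] using (abs_le.1 (hφ.dist_le_mul 0 y)).2
  have := mul_le_mul_of_nonneg_left hlip ht
  unfold legendreIntegrand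
  nlinarith

theorem legendreIntegrand_sub_le (hφ : LipschitzWith K φ) (ht : 0 ≤ t) (x y y₀ : V) :
    legendreIntegrand φ t x y₀ - legendreIntegrand φ t x y
      ≤ (‖x‖ + (‖y‖ + ‖y₀‖) / 2 + t * K) * ‖y - y₀‖ := by
  have hinner : ⟪x, y₀ - y⟫ ≤ ‖x‖ * ‖y - y₀‖ := by
    rw [norm_sub_rev]; exact real_inner_le_norm x _
  have hsq : ‖y‖ ^ 2 - ‖y₀‖ ^ 2 ≤ (‖y‖ + ‖y₀‖) * ‖y - y₀‖ := by
    have := norm_sub_norm_le y y₀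
    nlinarith [norm_nonneg y, norm_nonneg y₀]
  have hlip : φ y - φ y₀ ≤ K * ‖y - y₀‖ := by
    simpa [dist_eq_norm, Real.dist_eq] using (abs_le.1 (hφ.dist_le_mul y y₀)).2
  have := mul_le_mul_of_nonneg_left hlip ht
  unfold legendreIntegrand
  rw [inner_sub_right] at hinner
  nlinarith

theorem exists_forall_legendreIntegrand_le [ProperSpace V] (hφ : LipschitzWith K φ) (ht : 0 ≤ t)
    (x : V) :
    ∃ y₀, (∀ y, legendreIntegrand φ t x y ≤ legendreIntegrand φ t x y₀) ∧
      ‖y₀‖ ≤ 2 * (‖x‖ + t * K) := by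
  have hball : ∀ y, legendreIntegrand φ t x 0 ≤ legendreIntegrand φ t x y →
      ‖y‖ ≤ 2 * (‖x‖ + t * K) := fun y hy => by
    have h0 : legendreIntegrand φ t x 0 = -(t * φ 0) := by simp [legendreIntegrand]
    have := legendreIntegrand_le hφ ht x y
    nlinarith [norm_nonneg y, norm_nonneg x, mul_nonneg ht K.coe_nonneg]
  obtain ⟨y₀, hy₀⟩ := (continuous_legendreIntegrand hφ x).exists_forall_ge_of_isBounded 0
    ((isBounded_closedBall (x := 0)).subset fun y hy => mem_closedBall_zero_iff.2 (hball y hy))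
  exact ⟨y₀, hy₀, hball y₀ (hy₀ 0)⟩

theorem integrable_exp_legendreIntegrand_div [FiniteDimensional ℝ V] [MeasurableSpace V]
    [BorelSpace V] (hφ : LipschitzWith K φ) (ht : 0 ≤ t) (x : V) {η : ℝ} (hη : 0 < η) :
    Integrable (fun y => exp (legendreIntegrand φ t x y / η)) := by
  have := continuous_legendreIntegrand hφ (t := t) x
  refine (integrable_exp_mul_norm_sub_mul_sq_norm_sub ((‖x‖ + t * K) / η) (s := 1 / (2 * η))
    (by positivity) (t * φ 0 / η)).mono' (by fun_prop) (.of_forall fun y => ?_)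
  rw [norm_of_nonneg (exp_pos _).le, exp_le_exp]
  calc legendreIntegrand φ t x y / η
      ≤ ((‖x‖ + t * K) * ‖y‖ - ‖y‖ ^ 2 / 2 - t * φ 0) / η := by
        gcongr; exact legendreIntegrand_le hφ ht x y
    _ = _ := by field_simp

end LegendreIntegrand

section ColeHopf

variable {d : ℕ} {φ : EuclideanSpace ℝ (Fin d) → ℝ} {K : ℝ≥0} {t : ℝ}

theorem wFun_eq_of_forall_le {x y₀ : EuclideanSpace ℝ (Fin d)}
    (hmax : ∀ y, legendreIntegrand φ t x y ≤ legendreIntegrand φ t x y₀) :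
    wFun φ t x = legendreIntegrand φ t x y₀ :=
  le_antisymm (ciSup_le hmax) (le_ciSup ⟨_, Set.forall_mem_range.2 hmax⟩ y₀)

theorem sq_norm_div_two_sub_mul_coleHopf (hφ : LipschitzWith K φ) (ht : 0 < t)
    (x : EuclideanSpace ℝ (Fin d)) {ε : ℝ} (hε : 0 < ε) :
    ‖x‖ ^ 2 / 2 - t * coleHopf φ ε t x
      = -(d / 2) * (ε * t * log (2 * π * (ε * t)))
        + ε * t * log (∫ y, exp (legendreIntegrand φ t x y / (ε * t))) := by
  have hη : 0 < ε * t := mul_pos hε ht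
  have hsquare : ∀ y, -‖x - y‖ ^ 2 / (2 * ε * t) - φ y / ε
      = legendreIntegrand φ t x y / (ε * t) + -(‖x‖ ^ 2 / (2 * (ε * t))) := fun y => by
    rw [legendreIntegrand, norm_sub_sq_real]
    field_simp
    ring
  have hI := integral_exp_pos (integrable_exp_legendreIntegrand_div hφ ht.le x hη)
  simp_rw [coleHopf, hsquare, exp_add, integral_mul_const]
  rw [log_mul (by positivity) (by positivity), log_mul hI.ne' (exp_pos _).ne', log_exp,
    log_rpow (by positivity), show 2 * π * ε * t = 2 * π * (ε * t) by ring]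
  field_simp
  ring

theorem exists_abs_mul_log_integral_sub_wFun_le (hφ : LipschitzWith K φ) (ht : 0 ≤ t) (M : ℝ) :
    ∃ C, ∀ x : EuclideanSpace ℝ (Fin d), ‖x‖ ≤ M → ∀ η, 0 < η → η ≤ 1 →
      |η * log (∫ y, exp (legendreIntegrand φ t x y / η)) - wFun φ t x|
        ≤ C * (η + |η * log η|) := by
  set L := 3 * (M + t * K) + 1
  set JM := ∫ y : EuclideanSpace ℝ (Fin d), exp ((M + t * K) * ‖y‖ - 2⁻¹ * ‖y‖ ^ 2 - t * φ 0)
  set A := max (log JM + t * φ 0) 0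
  refine ⟨A + L + d + |log (volume.real (closedBall (0 : EuclideanSpace ℝ (Fin d)) 1))|,
    fun x hx η hη hη1 => ?_⟩
  obtain ⟨y₀, hmax, hy₀⟩ := exists_forall_legendreIntegrand_le hφ ht x
  have hint := integrable_exp_legendreIntegrand_div hφ ht x one_pos
  simp only [div_one] at hint
  have htK : 0 ≤ t * K := mul_nonneg ht K.coe_nonneg
  have hnear : ∀ y, dist y y₀ ≤ 1 →
      legendreIntegrand φ t x y₀ - L * dist y y₀ ≤ legendreIntegrand φ t x y := fun y hy => by
    rw [dist_eq_norm] at hy ⊢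
    have hy' : ‖y‖ ≤ ‖y₀‖ + 1 := by linarith [norm_le_norm_add_norm_sub' y y₀]
    have := legendreIntegrand_sub_le hφ ht x y y₀
    have : ‖x‖ + (‖y‖ + ‖y₀‖) / 2 + t * K ≤ L := by linarith
    nlinarith [norm_nonneg (y - y₀)]
  have hlogA : log (∫ y, exp (legendreIntegrand φ t x y)) ≤ legendreIntegrand φ t x y₀ + A := by
    have hJM : ∫ y, exp (legendreIntegrand φ t x y) ≤ JM := by
      refine integral_mono hint ?_ fun y => exp_le_exp.2 ?_
      · exact integrable_exp_mul_norm_sub_mul_sq_norm_sub _ (by norm_num) _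
      · have := legendreIntegrand_le hφ ht x y
        nlinarith [norm_nonneg y]
    have h0 : -(t * φ 0) ≤ legendreIntegrand φ t x y₀ := by
      simpa [legendreIntegrand] using hmax 0
    calc log (∫ y, exp (legendreIntegrand φ t x y)) ≤ log JM :=
          log_le_log (integral_exp_pos hint) hJM
      _ ≤ legendreIntegrand φ t x y₀ + A := by linarith [le_max_left (log JM + t * φ 0) 0]
  rw [wFun_eq_of_forall_le hmax]
  have := abs_mul_log_integral_exp_div_sub_le (continuous_legendreIntegrand hφ x).measurable
    hmax (by linarith [norm_nonneg x]) hnear hint (le_max_right _ _) hlogA hη hη1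
  rwa [finrank_euclideanSpace_fin] at this

theorem tendstoUniformlyOn_coleHopf_closedBall (hφ : LipschitzWith K φ) (ht : 0 < t) (M : ℝ) :
    TendstoUniformlyOn (fun ε x => ‖x‖ ^ 2 / 2 - t * coleHopf φ ε t x) (wFun φ t) (𝓝[>] 0)
      (closedBall 0 M) := by
  obtain ⟨C, hC⟩ := exists_abs_mul_log_integral_sub_wFun_le hφ ht.le M
  set ρ : ℝ → ℝ := fun η => d / 2 * |η * log (2 * π * η)| + C * (η + |η * log η|)
  have htη : Tendsto (fun ε => ε * t) (𝓝[>] 0) (𝓝 0) :=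
    tendsto_nhdsWithin_of_tendsto_nhds ((continuous_mul_const t).tendsto' 0 0 (zero_mul t))
  have hρ : Tendsto (fun ε => ρ (ε * t)) (𝓝[>] 0) (𝓝 0) := by
    have hcont : Continuous ρ := by
      have := continuous_mul_log_const_mul (2 * π)
      have := continuous_mul_log
      fun_prop
    have hρ0 : ρ 0 = 0 := by simp [ρ]
    have := (hcont.tendsto 0).comp htη
    rwa [hρ0] at this
  rw [Metric.tendstoUniformlyOn_iff]
  intro δ hδ
  filter_upwards [hρ.eventually (gt_mem_nhds hδ), self_mem_nhdsWithin,
    htη.eventually (ge_mem_nhds one_pos)] with ε hρε hε hεt x hx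
  rw [dist_comm, Real.dist_eq, sq_norm_div_two_sub_mul_coleHopf hφ ht x hε, add_sub_assoc]
  calc _ ≤ |-(d / 2) * (ε * t * log (2 * π * (ε * t)))|
        + |ε * t * log (∫ y, exp (legendreIntegrand φ t x y / (ε * t))) - wFun φ t x| :=
        abs_add_le _ _
    _ ≤ ρ (ε * t) := by
        rw [abs_mul, abs_neg, abs_of_nonneg (by positivity)]
        simp only [ρ]
        gcongr
        exact hC x (mem_closedBall_zero_iff.1 hx) _ (mul_pos hε ht) hεt
    _ < δ := hρε

end ColeHopf

theorem stmt7 (d : ℕ) (K : ℝ)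
    (φ : EuclideanSpace ℝ (Fin d) → ℝ)
    (hLip : ∀ y z, |φ y - φ z| ≤ K * ‖y - z‖)
    (t : ℝ) (ht : 0 < t) :
    (∀ x : EuclideanSpace ℝ (Fin d),
      Filter.Tendsto (fun ε : ℝ => ‖x‖ ^ 2 / 2 - t * coleHopf φ ε t x)
        (nhdsWithin 0 (Set.Ioi 0)) (nhds (wFun φ t x))) ∧
    (∀ Kc : Set (EuclideanSpace ℝ (Fin d)), IsCompact Kc →
      TendstoUniformlyOn (fun ε : ℝ => fun x => ‖x‖ ^ 2 / 2 - t * coleHopf φ ε t x)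
        (wFun φ t) (nhdsWithin 0 (Set.Ioi 0)) Kc) := by
  have hφ : LipschitzWith K.toNNReal φ := .of_dist_le_mul fun y z => by
    rw [Real.dist_eq, dist_eq_norm]
    exact (hLip y z).trans (by gcongr; exact K.le_coe_toNNReal)
  have huniform (Kc : Set (EuclideanSpace ℝ (Fin d))) (hKc : IsCompact Kc) :
      TendstoUniformlyOn (fun ε x => ‖x‖ ^ 2 / 2 - t * coleHopf φ ε t x) (wFun φ t)
        (𝓝[>] 0) Kc := by
    obtain ⟨M, hM⟩ := hKc.isBounded.subset_closedBall 0
    exact (tendstoUniformlyOn_coleHopf_closedBall hφ ht M).mono hM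
  exact ⟨fun x => tendstoUniformlyOn_singleton_iff_tendsto.1 (huniform _ isCompact_singleton),
    huniform⟩
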